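/- With U, Σ, C, U_Σ, H and L₂^Σ as in the context, every Φ ∈ L₂^Σ satisfies ‖Φ‖_{L(U_Σ,H)} ≤ ‖Φ‖_{L₂^Σ}, i.e. ‖Φu‖_H ≤ ‖Φ‖_{L₂^Σ}·‖u‖_{U_Σ} for all u ∈ U_Σ; hence L₂^Σ is continuously embedded, with embedding constant 1, in the space L(U_Σ,H) of bounded operators from U_Σ to H. -/
import Mathlib


open scoped InnerProductSpace ENNReal NNReal
open Filter
set_option maxHeartbeats 1000000

noncomputable section

variable {U : Type*} [NormedAddCommGroup U] [InnerProductSpace ℝ U] [CompleteSpace U]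
variable {H : Type*} [NormedAddCommGroup H] [InnerProductSpace ℝ H] [CompleteSpace H]

/-- The norm of `u` in the range of `S` (i.e. of `Q^{1/2}(U)` when `S = Q^{1/2}`):
`‖u‖ = inf { ‖v‖ : S v = u }`. -/
def rangeNorm (S : U →L[ℝ] U) (u : U) : ℝ :=
  sInf {r : ℝ | ∃ v : U, S v = u ∧ r = ‖v‖}

/-- Membership in `U_Σ`: `u` admits a representation `u = ∑ᵢ uᵢ` (convergent in `U`) with
`uᵢ ∈ Qᵢ^{1/2}(U)`, `Qᵢ ∈ Σ`, and `∑ᵢ ‖uᵢ‖_{Qᵢ^{1/2}(U)} < ∞`.  Here `R Q` denotes the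
positive square root `Q^{1/2}`. -/
def MemUSigma (Sig : Set (U →L[ℝ] U)) (R : (U →L[ℝ] U) → U →L[ℝ] U) (u : U) : Prop :=
  ∃ (Q : ℕ → U →L[ℝ] U) (v : ℕ → U),
    (∀ i, Q i ∈ Sig) ∧ (∀ i, v i ∈ Set.range (R (Q i))) ∧
    HasSum v u ∧ Summable (fun i => rangeNorm (R (Q i)) (v i))

/-- The norm on `U_Σ`: the infimum of `∑ᵢ ‖uᵢ‖_{Qᵢ^{1/2}(U)}` over all representations. -/
def normUSigma (Sig : Set (U →L[ℝ] U)) (R : (U →L[ℝ] U) → U →L[ℝ] U) (u : U) : ℝ :=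
  sInf {r : ℝ | ∃ (Q : ℕ → U →L[ℝ] U) (v : ℕ → U),
    (∀ i, Q i ∈ Sig) ∧ (∀ i, v i ∈ Set.range (R (Q i))) ∧
    HasSum v u ∧ Summable (fun i => rangeNorm (R (Q i)) (v i)) ∧
    r = ∑' i, rangeNorm (R (Q i)) (v i)}

/-- The square of the `L₂^Σ`-norm of a linear map `Φ` (considered on `U_Σ`):
`‖Φ‖²_{L₂^Σ} = sup_{Q∈Σ} ‖Φ ∘ Q^{1/2}‖²_{L₂(U,H)}`, the Hilbert–Schmidt norm being
computed via the orthonormal basis `bU`; valued in `ℝ≥0∞`. -/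
def l2SigmaNormSq (bU : HilbertBasis ℕ ℝ U) (Sig : Set (U →L[ℝ] U))
    (R : (U →L[ℝ] U) → U →L[ℝ] U) (Φ : U →ₗ[ℝ] H) : ℝ≥0∞ :=
  ⨆ Q ∈ Sig, ∑' i : ℕ, (‖Φ (R Q (bU i))‖₊ : ℝ≥0∞) ^ 2

section Aux

variable (Sig : Set (U →L[ℝ] U)) (R : (U →L[ℝ] U) → U →L[ℝ] U)

lemma rangeNorm_nonneg (S : U →L[ℝ] U) (u : U) : 0 ≤ rangeNorm S u := by
  rcases Set.eq_empty_or_nonempty {r : ℝ | ∃ v : U, S v = u ∧ r = ‖v‖} with h | h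
  · simp [rangeNorm, h, Real.sInf_empty]
  · exact le_csInf h (by rintro r ⟨v, -, rfl⟩; positivity)

lemma rangeNorm_apply_le (S : U →L[ℝ] U) (v : U) : rangeNorm S (S v) ≤ ‖v‖ :=
  csInf_le ⟨0, by rintro r ⟨w, -, rfl⟩; positivity⟩ ⟨v, rfl, rfl⟩

lemma rangeNorm_zero (S : U →L[ℝ] U) : rangeNorm S 0 = 0 :=
  le_antisymm (by simpa using rangeNorm_apply_le S 0) (rangeNorm_nonneg S 0)

lemma normUSigma_bddBelow (u : U) :
    BddBelow {r : ℝ | ∃ (Q : ℕ → U →L[ℝ] U) (v : ℕ → U),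
      (∀ i, Q i ∈ Sig) ∧ (∀ i, v i ∈ Set.range (R (Q i))) ∧
      HasSum v u ∧ Summable (fun i => rangeNorm (R (Q i)) (v i)) ∧
      r = ∑' i, rangeNorm (R (Q i)) (v i)} := by
  refine ⟨0, ?_⟩
  rintro r ⟨Q, v, -, -, -, -, rfl⟩
  exact tsum_nonneg fun i => rangeNorm_nonneg _ _

lemma normUSigma_nonneg_of_mem {u : U} (hu : MemUSigma Sig R u) :
    0 ≤ normUSigma Sig R u := by
  obtain ⟨Q, v, h1, h2, h3, h4⟩ := hu
  refine le_csInf ⟨_, Q, v, h1, h2, h3, h4, rfl⟩ ?_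
  rintro r ⟨Q', v', -, -, -, -, rfl⟩
  exact tsum_nonneg fun i => rangeNorm_nonneg _ _

lemma memUSigma_single {Q : U →L[ℝ] U} (hQ : Q ∈ Sig) (x : U) :
    MemUSigma Sig R (R Q x) := by
  refine ⟨fun _ => Q, fun i => if i = 0 then R Q x else 0, fun _ => hQ, ?_,
    hasSum_ite_eq 0 (R Q x), ?_⟩
  · intro i
    by_cases h : i = 0
    · simpa [h] using ⟨x, rfl⟩
    · simpa [h] using ⟨0, map_zero _⟩
  · refine summable_of_ne_finset_zero (s := {0}) ?_
    intro i hi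
    simp only [Finset.mem_singleton] at hi
    simp [hi, rangeNorm_zero]

lemma normUSigma_single_le {Q : U →L[ℝ] U} (hQ : Q ∈ Sig) (x : U) :
    normUSigma Sig R (R Q x) ≤ ‖x‖ := by
  have hmem : (∑' i : ℕ, rangeNorm (R Q) (if i = 0 then R Q x else 0)) ∈
      {r : ℝ | ∃ (Q' : ℕ → U →L[ℝ] U) (v : ℕ → U),
        (∀ i, Q' i ∈ Sig) ∧ (∀ i, v i ∈ Set.range (R (Q' i))) ∧
        HasSum v (R Q x) ∧ Summable (fun i => rangeNorm (R (Q' i)) (v i)) ∧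
        r = ∑' i, rangeNorm (R (Q' i)) (v i)} := by
    refine ⟨fun _ => Q, fun i => if i = 0 then R Q x else 0, fun _ => hQ, ?_,
      hasSum_ite_eq 0 (R Q x), ?_, rfl⟩
    · intro i
      by_cases h : i = 0
      · simpa [h] using ⟨x, rfl⟩
      · simpa [h] using ⟨0, map_zero _⟩
    · refine summable_of_ne_finset_zero (s := {0}) ?_
      intro i hi
      simp only [Finset.mem_singleton] at hi
      simp [hi, rangeNorm_zero]
  have h1 : normUSigma Sig R (R Q x) ≤
      ∑' i : ℕ, rangeNorm (R Q) (if i = 0 then R Q x else 0) :=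
    csInf_le (normUSigma_bddBelow Sig R _) hmem
  have h2 : (∑' i : ℕ, rangeNorm (R Q) (if i = 0 then R Q x else 0)) =
      rangeNorm (R Q) (R Q x) := by
    refine tsum_eq_single 0 ?_
    intro i hi
    simp [hi, rangeNorm_zero]
  rw [h2] at h1
  exact h1.trans (rangeNorm_apply_le _ _)

lemma coreA (bU : HilbertBasis ℕ ℝ U) (Φ : U →ₗ[ℝ] H) (K : ℝ) (hK0 : 0 ≤ K)
    (hK : ∀ u : U, MemUSigma Sig R u → ‖Φ u‖ ≤ K * normUSigma Sig R u)
    (hΦfin : l2SigmaNormSq bU Sig R Φ ≠ ∞)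
    {Q : U →L[ℝ] U} (hQ : Q ∈ Sig) (w : U) :
    ‖Φ (R Q w)‖ ≤ Real.sqrt (l2SigmaNormSq bU Sig R Φ).toReal * ‖w‖ := by
  set Mr : ℝ := (l2SigmaNormSq bU Sig R Φ).toReal with hMr
  set c : ℕ → ℝ := fun i => bU.repr w i with hc
  set h : ℕ → H := fun i => Φ (R Q (bU i)) with hh
  -- Hilbert-Schmidt bound on finite sums
  have hQle : (∑' i : ℕ, (‖Φ (R Q (bU i))‖₊ : ℝ≥0∞) ^ 2) ≤ l2SigmaNormSq bU Sig R Φ :=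
    le_iSup₂ (f := fun (Q : U →L[ℝ] U) (_ : Q ∈ Sig) =>
      ∑' i : ℕ, (‖Φ (R Q (bU i))‖₊ : ℝ≥0∞) ^ 2) Q hQ
  have step1 : ∀ F : Finset ℕ, ∑ i ∈ F, ‖h i‖ ^ 2 ≤ Mr := by
    intro F
    have e1 : ∑ i ∈ F, ‖h i‖ ^ 2 = (∑ i ∈ F, (‖h i‖₊ : ℝ≥0∞) ^ 2).toReal := by
      rw [ENNReal.toReal_sum (by intro a _; exact ENNReal.pow_ne_top ENNReal.coe_ne_top)]
      simp [ENNReal.toReal_pow]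
    rw [e1]
    exact ENNReal.toReal_mono hΦfin ((ENNReal.sum_le_tsum F).trans hQle)
  have hBessel : ∀ F : Finset ℕ, ∑ i ∈ F, (c i) ^ 2 ≤ ‖w‖ ^ 2 := by
    intro F
    have := bU.orthonormal.sum_inner_products_le (s := F) w
    simpa [hc, bU.repr_apply_apply, Real.norm_eq_abs, sq_abs] using this
  have step2 : ∀ F : Finset ℕ, ‖∑ i ∈ F, c i • h i‖ ≤ Real.sqrt Mr * ‖w‖ := by
    intro F
    have h0 : ‖∑ i ∈ F, c i • h i‖ ≤ ∑ i ∈ F, |c i| * ‖h i‖ := by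
      refine (norm_sum_le _ _).trans ?_
      refine Finset.sum_le_sum fun i _ => ?_
      rw [norm_smul, Real.norm_eq_abs]
    have h1 : (∑ i ∈ F, |c i| * ‖h i‖) ^ 2 ≤
        (∑ i ∈ F, (c i) ^ 2) * (∑ i ∈ F, ‖h i‖ ^ 2) := by
      have := Finset.sum_mul_sq_le_sq_mul_sq F (fun i => |c i|) (fun i => ‖h i‖)
      simpa [sq_abs] using this
    have hnn : 0 ≤ ∑ i ∈ F, |c i| * ‖h i‖ :=
      Finset.sum_nonneg fun i _ => mul_nonneg (abs_nonneg _) (norm_nonneg _)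
    have h2 : ∑ i ∈ F, |c i| * ‖h i‖ ≤ Real.sqrt (‖w‖ ^ 2 * Mr) := by
      rw [← Real.sqrt_sq hnn]
      refine Real.sqrt_le_sqrt ?_
      refine h1.trans ?_
      exact mul_le_mul (hBessel F) (step1 F)
        (Finset.sum_nonneg fun i _ => sq_nonneg _) (sq_nonneg _)
    have h3 : Real.sqrt (‖w‖ ^ 2 * Mr) = ‖w‖ * Real.sqrt Mr := by
      rw [Real.sqrt_mul (sq_nonneg _), Real.sqrt_sq (norm_nonneg _)]
    refine (h0.trans h2).trans ?_
    rw [h3, mul_comm]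
  -- convergence of the images of partial sums
  have hw : HasSum (fun i => c i • bU i) w := bU.hasSum_repr w
  have key : ∀ F : Finset ℕ,
      (∑ i ∈ F, c i • h i) - Φ (R Q w) = Φ (R Q ((∑ i ∈ F, c i • bU i) - w)) := by
    intro F
    rw [map_sub, map_sub, map_sum, map_sum]
    simp [hh]
  have hdiff : Tendsto (fun F : Finset ℕ => ‖(∑ i ∈ F, c i • bU i) - w‖)
      Filter.atTop (nhds 0) := tendsto_iff_norm_sub_tendsto_zero.mp hw
  have hbound : ∀ F : Finset ℕ,
      ‖(∑ i ∈ F, c i • h i) - Φ (R Q w)‖ ≤ K * ‖(∑ i ∈ F, c i • bU i) - w‖ := by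
    intro F
    rw [key F]
    refine (hK _ (memUSigma_single Sig R hQ _)).trans ?_
    exact mul_le_mul_of_nonneg_left (normUSigma_single_le Sig R hQ _) hK0
  have hzero : Tendsto (fun F : Finset ℕ => ‖(∑ i ∈ F, c i • h i) - Φ (R Q w)‖)
      Filter.atTop (nhds 0) := by
    have hK' : Tendsto (fun F : Finset ℕ => K * ‖(∑ i ∈ F, c i • bU i) - w‖)
        Filter.atTop (nhds 0) := by
      simpa using hdiff.const_mul K
    exact squeeze_zero (fun F => norm_nonneg _) hbound hK'
  have htend : Tendsto (fun F : Finset ℕ => ∑ i ∈ F, c i • h i)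
      Filter.atTop (nhds (Φ (R Q w))) :=
    tendsto_iff_norm_sub_tendsto_zero.mpr hzero
  exact le_of_tendsto htend.norm (Filter.Eventually.of_forall step2)

lemma coreB (bU : HilbertBasis ℕ ℝ U) (Φ : U →ₗ[ℝ] H) (K : ℝ) (hK0 : 0 ≤ K)
    (hK : ∀ u : U, MemUSigma Sig R u → ‖Φ u‖ ≤ K * normUSigma Sig R u)
    (hΦfin : l2SigmaNormSq bU Sig R Φ ≠ ∞)
    {Q : U →L[ℝ] U} (hQ : Q ∈ Sig) {x : U} (hx : x ∈ Set.range (R Q)) :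
    ‖Φ x‖ ≤ Real.sqrt (l2SigmaNormSq bU Sig R Φ).toReal * rangeNorm (R Q) x := by
  set s : ℝ := Real.sqrt (l2SigmaNormSq bU Sig R Φ).toReal with hs
  have hs0 : 0 ≤ s := Real.sqrt_nonneg _
  rcases hs0.eq_or_lt with hse | hsl
  · obtain ⟨w, rfl⟩ := hx
    have := coreA Sig R bU Φ K hK0 hK hΦfin hQ w
    rw [← hs, ← hse] at this
    rw [← hse, zero_mul]
    simpa using this
  · have hinf : ‖Φ x‖ / s ≤ rangeNorm (R Q) x := by
      obtain ⟨w, hw⟩ := hx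
      refine le_csInf ⟨‖w‖, w, hw, rfl⟩ ?_
      rintro r ⟨v, hv, rfl⟩
      rw [div_le_iff₀ hsl]
      have := coreA Sig R bU Φ K hK0 hK hΦfin hQ v
      rw [← hs, hv] at this
      linarith [this]
    have := (div_le_iff₀ hsl).mp hinf
    linarith [this]

lemma repBound (bU : HilbertBasis ℕ ℝ U) (Φ : U →ₗ[ℝ] H) (K : ℝ) (hK0 : 0 ≤ K)
    (hK : ∀ u : U, MemUSigma Sig R u → ‖Φ u‖ ≤ K * normUSigma Sig R u)
    (hΦfin : l2SigmaNormSq bU Sig R Φ ≠ ∞)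
    (u : U) (Q : ℕ → U →L[ℝ] U) (v : ℕ → U)
    (h1 : ∀ i, Q i ∈ Sig) (h2 : ∀ i, v i ∈ Set.range (R (Q i)))
    (h3 : HasSum v u) (h4 : Summable (fun i => rangeNorm (R (Q i)) (v i))) :
    ‖Φ u‖ ≤ Real.sqrt (l2SigmaNormSq bU Sig R Φ).toReal *
      ∑' i, rangeNorm (R (Q i)) (v i) := by
  set s : ℝ := Real.sqrt (l2SigmaNormSq bU Sig R Φ).toReal with hs
  have hs0 : 0 ≤ s := Real.sqrt_nonneg _
  set T : ℝ := ∑' i, rangeNorm (R (Q i)) (v i) with hT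
  have hterm : ∀ i, ‖Φ (v i)‖ ≤ s * rangeNorm (R (Q i)) (v i) := fun i =>
    coreB Sig R bU Φ K hK0 hK hΦfin (h1 i) (h2 i)
  -- bound on the images of partial sums
  have hpartial : ∀ n : ℕ, ‖Φ (∑ i ∈ Finset.range n, v i)‖ ≤ s * T := by
    intro n
    rw [map_sum]
    refine (norm_sum_le _ _).trans ?_
    calc ∑ i ∈ Finset.range n, ‖Φ (v i)‖
        ≤ ∑ i ∈ Finset.range n, s * rangeNorm (R (Q i)) (v i) :=
          Finset.sum_le_sum fun i _ => hterm i
      _ = s * ∑ i ∈ Finset.range n, rangeNorm (R (Q i)) (v i) := by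
          rw [Finset.mul_sum]
      _ ≤ s * T := by
          refine mul_le_mul_of_nonneg_left ?_ hs0
          exact Summable.sum_le_tsum _ (fun i _ => rangeNorm_nonneg _ _) h4
  -- the partial sums converge to u in the U_Sigma norm
  have htail : ∀ n : ℕ, normUSigma Sig R (u - ∑ i ∈ Finset.range n, v i) ≤
      ∑' j, rangeNorm (R (Q (j + n))) (v (j + n)) ∧
      MemUSigma Sig R (u - ∑ i ∈ Finset.range n, v i) := by
    intro n
    have hsum' : HasSum (fun j => v (j + n)) (u - ∑ i ∈ Finset.range n, v i) := by
      refine (hasSum_nat_add_iff n).mpr ?_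
      simpa using h3
    have hsumm' : Summable (fun j => rangeNorm (R (Q (j + n))) (v (j + n))) :=
      (summable_nat_add_iff n).mpr h4
    have hmem : (∑' j, rangeNorm (R (Q (j + n))) (v (j + n))) ∈
        {r : ℝ | ∃ (Q' : ℕ → U →L[ℝ] U) (v' : ℕ → U),
          (∀ i, Q' i ∈ Sig) ∧ (∀ i, v' i ∈ Set.range (R (Q' i))) ∧
          HasSum v' (u - ∑ i ∈ Finset.range n, v i) ∧
          Summable (fun i => rangeNorm (R (Q' i)) (v' i)) ∧
          r = ∑' i, rangeNorm (R (Q' i)) (v' i)} :=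
      ⟨fun j => Q (j + n), fun j => v (j + n), fun j => h1 _, fun j => h2 _,
        hsum', hsumm', rfl⟩
    exact ⟨csInf_le (normUSigma_bddBelow Sig R _) hmem,
      ⟨fun j => Q (j + n), fun j => v (j + n), fun j => h1 _, fun j => h2 _,
        hsum', hsumm'⟩⟩
  have htails : Tendsto (fun n => ∑' j, rangeNorm (R (Q (j + n))) (v (j + n)))
      Filter.atTop (nhds 0) := by
    exact tendsto_sum_nat_add (fun i => rangeNorm (R (Q i)) (v i))
  have hnormdiff : Tendsto (fun n => ‖Φ u - Φ (∑ i ∈ Finset.range n, v i)‖)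
      Filter.atTop (nhds 0) := by
    have hb : ∀ n : ℕ, ‖Φ u - Φ (∑ i ∈ Finset.range n, v i)‖ ≤
        K * ∑' j, rangeNorm (R (Q (j + n))) (v (j + n)) := by
      intro n
      rw [← map_sub]
      refine (hK _ (htail n).2).trans ?_
      exact mul_le_mul_of_nonneg_left (htail n).1 hK0
    have hK' : Tendsto (fun n => K * ∑' j, rangeNorm (R (Q (j + n))) (v (j + n)))
        Filter.atTop (nhds 0) := by
      simpa using htails.const_mul K
    exact squeeze_zero (fun n => norm_nonneg _) hb hK'
  have htendΦ : Tendsto (fun n => Φ (∑ i ∈ Finset.range n, v i))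
      Filter.atTop (nhds (Φ u)) := by
    refine tendsto_iff_norm_sub_tendsto_zero.mpr ?_
    simpa [norm_sub_rev] using hnormdiff
  exact le_of_tendsto htendΦ.norm (Filter.Eventually.of_forall hpartial)

end Aux

/-- every `Φ ∈ L₂^Σ` (a bounded operator `U_Σ → H` with finite `L₂^Σ`-norm)
satisfies `‖Φ u‖_H ≤ ‖Φ‖_{L₂^Σ}·‖u‖_{U_Σ}` for all `u ∈ U_Σ`; hence `L₂^Σ` embeds
continuously, with constant `1`, into `L(U_Σ, H)`. -/
theorem l2Sigma_embeds_into_bounded_operators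
    (bU : HilbertBasis ℕ ℝ U)
    (Sig : Set (U →L[ℝ] U)) (hne : Sig.Nonempty)
    (hpos : ∀ Q ∈ Sig, Q.IsPositive)
    (htc : ∀ Q ∈ Sig, Summable (fun i : ℕ => ⟪Q (bU i), bU i⟫_ℝ))
    (C : ℝ) (hC : 0 < C) (hbdd : ∀ Q ∈ Sig, ‖Q‖ ≤ C ^ 2)
    (R : (U →L[ℝ] U) → U →L[ℝ] U)
    (hR : ∀ Q ∈ Sig, (R Q).IsPositive ∧ (R Q) ∘L (R Q) = Q)
    (Φ : U →ₗ[ℝ] H)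
    -- `Φ` is a bounded operator on `(U_Σ, ‖·‖_{U_Σ})`
    (hΦbdd : ∃ K : ℝ, ∀ u : U, MemUSigma Sig R u → ‖Φ u‖ ≤ K * normUSigma Sig R u)
    -- `Φ` has finite `L₂^Σ`-norm
    (hΦfin : l2SigmaNormSq bU Sig R Φ ≠ ∞) :
    ∀ u : U, MemUSigma Sig R u →
      ‖Φ u‖ ≤ Real.sqrt (l2SigmaNormSq bU Sig R Φ).toReal * normUSigma Sig R u := by
  obtain ⟨K, hKb⟩ := hΦbdd
  set K' : ℝ := max K 0 with hK'
  have hK0 : 0 ≤ K' := le_max_right _ _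
  have hKb' : ∀ u : U, MemUSigma Sig R u → ‖Φ u‖ ≤ K' * normUSigma Sig R u := by
    intro u hu
    refine (hKb u hu).trans ?_
    exact mul_le_mul_of_nonneg_right (le_max_left _ _) (normUSigma_nonneg_of_mem Sig R hu)
  intro u hu
  set s : ℝ := Real.sqrt (l2SigmaNormSq bU Sig R Φ).toReal with hs
  have hs0 : 0 ≤ s := Real.sqrt_nonneg _
  obtain ⟨Q, v, h1, h2, h3, h4⟩ := hu
  rcases hs0.eq_or_lt with hse | hsl
  · have := repBound Sig R bU Φ K' hK0 hKb' hΦfin u Q v h1 h2 h3 h4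
    rw [← hs, ← hse, zero_mul] at this
    rw [← hse, zero_mul]
    exact this
  · have hinf : ‖Φ u‖ / s ≤ normUSigma Sig R u := by
      refine le_csInf ⟨_, Q, v, h1, h2, h3, h4, rfl⟩ ?_
      rintro r ⟨Q', v', h1', h2', h3', h4', rfl⟩
      rw [div_le_iff₀ hsl]
      have := repBound Sig R bU Φ K' hK0 hKb' hΦfin u Q' v' h1' h2' h3' h4'
      rw [← hs] at this
      linarith [this]
    have := (div_le_iff₀ hsl).mp hinf
    linarith [this]

end
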